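/- arXiv:2301.12367 — 6 statements merged into one kernel-verified Lean document; each statement's English description precedes it below -/
import Mathlib

section
/- In the extended affine Temperley–Lieb algebra D_n with presentation given by generators E_1,…,E_n, u, u^{-1} and relations (1)–(5), the identity E_{i+2}E_{i+3}⋯E_{i+n} = u²E_i holds for every i, where all indices are taken modulo n (a product of n−1 consecutive generators). -/
/-- In the extended affine Temperley–Lieb algebra `D_n` presented by
generators `E_1,…,E_n, u, u⁻¹` and relations (1)–(5), the identity
`E_{i+2} E_{i+3} ⋯ E_{i+n} = u² E_i` (a product of `n-1` consecutive generators,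
indices mod `n`) holds for every `i`. -/
theorem extended_affineTL_winding_identity
    {R A : Type*} [CommRing R] [Ring A] [Algebra R A]
    (n : ℕ) (hn : 3 ≤ n) (δ : R) (E : ZMod n → A) (u uinv : A)
    (huu : u * uinv = 1) (huu' : uinv * u = 1)
    (h1 : ∀ i : ZMod n, E i * E i = δ • E i)
    (h2 : ∀ i j : ZMod n, i ≠ j + 1 → i ≠ j - 1 → E i * E j = E j * E i)
    (h3 : ∀ i : ZMod n, E i * E (i + 1) * E i = E i)
    (h3' : ∀ i : ZMod n, E i * E (i - 1) * E i = E i)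
    (h4 : ∀ i : ZMod n, u * E i * uinv = E (i + 1))
    (h5 : (u * E 1) ^ (n - 1) = u ^ n * (u * E 1)) :
    ∀ i : ZMod n,
      ((List.range (n - 1)).map (fun k => E (i + 2 + (k : ZMod n)))).prod
        = u ^ 2 * E i := by
  have swap : ∀ j : ZMod n, u * E j = E (j + 1) * u := by
    intro j
    calc u * E j = (u * E j * uinv) * u := by rw [mul_assoc, huu', mul_one]
    _ = E (j + 1) * u := by rw [h4]
  have swappow : ∀ (m : ℕ) (j : ZMod n),
      u ^ m * E j = E (j + (m : ZMod n)) * u ^ m := by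
    intro m
    induction m with
    | zero => intro j; simp
    | succ m ih =>
      intro j
      calc u ^ (m + 1) * E j = u * (u ^ m * E j) := by rw [pow_succ', mul_assoc]
      _ = u * (E (j + (m : ZMod n)) * u ^ m) := by rw [ih]
      _ = (u * E (j + (m : ZMod n))) * u ^ m := by rw [mul_assoc]
      _ = E (j + (m : ZMod n) + 1) * (u * u ^ m) := by rw [swap, mul_assoc]
      _ = E (j + ((m : ℕ) + 1 : ℕ)) * u ^ (m + 1) := by
          rw [← pow_succ', Nat.cast_add, Nat.cast_one, ← add_assoc]
  have uipow : ∀ m : ℕ, u ^ m * uinv ^ m = 1 := by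
    intro m
    induction m with
    | zero => simp
    | succ m ih =>
      calc u ^ (m + 1) * uinv ^ (m + 1) = u * (u ^ m * uinv ^ m) * uinv := by
            rw [pow_succ' u, pow_succ uinv]; simp only [mul_assoc]
      _ = 1 := by rw [ih, mul_one, huu]
  -- (u E_1)^m = E_2 ⋯ E_{m+1} u^m
  have prodB : ∀ m : ℕ, (u * E 1) ^ m =
      ((List.range m).map (fun k : ℕ => E (2 + (k : ZMod n)))).prod * u ^ m := by
    intro m
    induction m with
    | zero => simp
    | succ m ih =>
      rw [pow_succ, ih, List.range_succ]
      simp only [List.map_append, List.prod_append, List.map_cons, List.map_nil,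
        List.prod_cons, List.prod_nil, mul_one]
      have e1 : (1 : ZMod n) + (((m : ℕ) + 1 : ℕ) : ZMod n) = 2 + (m : ZMod n) := by
        push_cast; ring
      calc ((List.range m).map (fun k : ℕ => E (2 + (k : ZMod n)))).prod * u ^ m * (u * E 1)
          = ((List.range m).map (fun k : ℕ => E (2 + (k : ZMod n)))).prod *
              (u ^ (m + 1) * E 1) := by rw [pow_succ]; simp only [mul_assoc]
      _ = ((List.range m).map (fun k : ℕ => E (2 + (k : ZMod n)))).prod *
              (E ((1 : ZMod n) + (((m : ℕ) + 1 : ℕ) : ZMod n)) * u ^ (m + 1)) := by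
            rw [swappow]
      _ = ((List.range m).map (fun k : ℕ => E (2 + (k : ZMod n)))).prod *
              E (2 + (m : ZMod n)) * u ^ (m + 1) := by rw [e1, mul_assoc]
  -- base case
  have base : ((List.range (n - 1)).map (fun k : ℕ => E (2 + (k : ZMod n)))).prod
      = u ^ 2 * E 0 := by
    have h5' : ((List.range (n - 1)).map (fun k : ℕ => E (2 + (k : ZMod n)))).prod * u ^ (n - 1)
        = E 2 * u ^ (n + 1) := by
      rw [← prodB, h5]
      calc u ^ n * (u * E 1) = u ^ (n + 1) * E 1 := by
            rw [pow_succ]; simp only [mul_assoc]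
      _ = E ((1 : ZMod n) + ((n + 1 : ℕ) : ZMod n)) * u ^ (n + 1) := by rw [swappow]
      _ = E 2 * u ^ (n + 1) := by
          have : (1 : ZMod n) + ((n + 1 : ℕ) : ZMod n) = 2 := by
            push_cast [ZMod.natCast_self]; ring
          rw [this]
    have cancel : ((List.range (n - 1)).map (fun k : ℕ => E (2 + (k : ZMod n)))).prod
        = E 2 * u ^ (n + 1) * uinv ^ (n - 1) := by
      calc ((List.range (n - 1)).map (fun k : ℕ => E (2 + (k : ZMod n)))).prod
          = ((List.range (n - 1)).map (fun k : ℕ => E (2 + (k : ZMod n)))).prod *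
              (u ^ (n - 1) * uinv ^ (n - 1)) := by rw [uipow, mul_one]
      _ = E 2 * u ^ (n + 1) * uinv ^ (n - 1) := by rw [← mul_assoc, h5']
    have hp : n + 1 = 2 + (n - 1) := by omega
    rw [cancel, hp, pow_add, ← mul_assoc, mul_assoc (E 2 * u ^ 2), uipow, mul_one]
    have h02 := swappow 2 0
    simp only [Nat.cast_ofNat, zero_add] at h02
    rw [h02]
  -- conjugation shifts the whole product
  have lswap : ∀ (m : ℕ) (j : ZMod n),
      u * ((List.range m).map (fun k : ℕ => E (j + 2 + (k : ZMod n)))).prod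
        = ((List.range m).map (fun k : ℕ => E (j + 1 + 2 + (k : ZMod n)))).prod * u := by
    intro m j
    induction m with
    | zero => simp
    | succ m ih =>
      rw [List.range_succ]
      simp only [List.map_append, List.prod_append, List.map_cons, List.map_nil,
        List.prod_cons, List.prod_nil, mul_one]
      have e2 : j + 2 + (m : ZMod n) + 1 = j + 1 + 2 + (m : ZMod n) := by ring
      calc u * (((List.range m).map (fun k : ℕ => E (j + 2 + (k : ZMod n)))).prod
              * E (j + 2 + (m : ZMod n)))
          = (u * ((List.range m).map (fun k : ℕ => E (j + 2 + (k : ZMod n)))).prod)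
              * E (j + 2 + (m : ZMod n)) := by rw [mul_assoc]
      _ = ((List.range m).map (fun k : ℕ => E (j + 1 + 2 + (k : ZMod n)))).prod *
              (u * E (j + 2 + (m : ZMod n))) := by rw [ih, mul_assoc]
      _ = ((List.range m).map (fun k : ℕ => E (j + 1 + 2 + (k : ZMod n)))).prod *
              E (j + 1 + 2 + (m : ZMod n)) * u := by
            rw [swap, e2, ← mul_assoc]
  -- the statement for natural-number indices
  have main : ∀ m : ℕ,
      ((List.range (n - 1)).map (fun k : ℕ => E ((m : ZMod n) + 2 + (k : ZMod n)))).prod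
        = u ^ 2 * E (m : ZMod n) := by
    intro m
    induction m with
    | zero => simpa using base
    | succ m ih =>
      have key := lswap (n - 1) (m : ZMod n)
      have cast1 : (((m : ℕ) + 1 : ℕ) : ZMod n) = (m : ZMod n) + 1 := by push_cast; ring
      rw [cast1]
      have step : ((List.range (n - 1)).map
            (fun k : ℕ => E ((m : ZMod n) + 1 + 2 + (k : ZMod n)))).prod
          = u * (u ^ 2 * E (m : ZMod n)) * uinv := by
        rw [← ih]
        calc ((List.range (n - 1)).map
              (fun k : ℕ => E ((m : ZMod n) + 1 + 2 + (k : ZMod n)))).prod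
            = ((List.range (n - 1)).map
              (fun k : ℕ => E ((m : ZMod n) + 1 + 2 + (k : ZMod n)))).prod * (u * uinv) := by
              rw [huu, mul_one]
        _ = (((List.range (n - 1)).map
              (fun k : ℕ => E ((m : ZMod n) + 1 + 2 + (k : ZMod n)))).prod * u) * uinv := by
              rw [mul_assoc]
        _ = u * ((List.range (n - 1)).map
              (fun k : ℕ => E ((m : ZMod n) + 2 + (k : ZMod n)))).prod * uinv := by
              rw [← key]
      rw [step]
      have huc : u * u ^ 2 = u ^ 2 * u := by rw [← pow_succ', ← pow_succ]
      calc u * (u ^ 2 * E (m : ZMod n)) * uinv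
          = ((u * u ^ 2) * E (m : ZMod n)) * uinv := by rw [← mul_assoc]
      _ = u ^ 2 * (u * E (m : ZMod n) * uinv) := by rw [huc]; simp only [mul_assoc]
      _ = u ^ 2 * E ((m : ZMod n) + 1) := by rw [h4]
  intro i
  haveI : NeZero n := ⟨by omega⟩
  have hi : ((i.val : ℕ) : ZMod n) = i := by
    simp [ZMod.natCast_val, ZMod.cast_id]
  have goal2 := main i.val
  rw [hi] at goal2
  simpa only [bind_pure_comp, List.map_eq_map, List.map_map, Function.comp_def] using goal2
end

section
/- In the algebra D_n defined by the presentation with generators E_1,…,E_n, u, u^{±1} and relations (1)–(5), the relation (uE_1)^{n-1} = u^n·(uE_1) is equivalent (given relations (1)–(4)) to the relation E_3E_4⋯E_nE_1 = u²E_1. -/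
/-- Given relations (1)–(4) of the presentation of `D_n`, relation (5),
`(uE_1)^{n-1} = uⁿ·(uE_1)`, is equivalent to the relation `E_3 E_4 ⋯ E_n E_1 = u² E_1`. -/
theorem extended_affineTL_relation_five_equivalence
    {R A : Type*} [CommRing R] [Ring A] [Algebra R A]
    (n : ℕ) (hn : 3 ≤ n) (δ : R) (E : ZMod n → A) (u uinv : A)
    (huu : u * uinv = 1) (huu' : uinv * u = 1)
    (h1 : ∀ i : ZMod n, E i * E i = δ • E i)
    (h2 : ∀ i j : ZMod n, i ≠ j + 1 → i ≠ j - 1 → E i * E j = E j * E i)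
    (h3 : ∀ i : ZMod n, E i * E (i + 1) * E i = E i)
    (h3' : ∀ i : ZMod n, E i * E (i - 1) * E i = E i)
    (h4 : ∀ i : ZMod n, u * E i * uinv = E (i + 1)) :
    (u * E 1) ^ (n - 1) = u ^ n * (u * E 1) ↔
      ((List.range (n - 1)).map (fun k => E (3 + (k : ZMod n)))).prod = u ^ 2 * E 1 := by
  have hgoal : ((List.range (n - 1)).map (fun k => E (3 + (k : ZMod n)))).prod
      = ((List.range (n - 1)).map (fun k : ℕ => E (3 + (k : ZMod n)))).prod := by
    simp only [bind_pure_comp, List.map_eq_map, List.map_map]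
    rfl
  rw [hgoal]
  -- E i * u = u * E (i - 1)
  have hEu : ∀ i : ZMod n, E i * u = u * E (i - 1) := by
    intro i
    have h := h4 (i - 1)
    rw [sub_add_cancel] at h
    calc E i * u = (u * E (i - 1) * uinv) * u := by rw [h]
      _ = u * E (i - 1) * (uinv * u) := by rw [mul_assoc]
      _ = u * E (i - 1) := by rw [huu', mul_one]
  -- E i * u ^ m = u ^ m * E (i - m)
  have hEum : ∀ (m : ℕ) (i : ZMod n), E i * u ^ m = u ^ m * E (i - m) := by
    intro m
    induction m with
    | zero => intro i; simp
    | succ m ih =>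
      intro i
      rw [pow_succ', ← mul_assoc, hEu, mul_assoc, ih, ← mul_assoc, ← pow_succ']
      congr 1
      push_cast
      ring
  -- main expansion
  have hmain : ∀ m : ℕ, (u * E 1) ^ m =
      u ^ m * ((List.range m).map (fun k : ℕ => E ((2 : ZMod n) - (m : ZMod n) + (k : ZMod n)))).prod := by
    intro m
    induction m with
    | zero => simp
    | succ m ih =>
      rw [pow_succ', ih, ← mul_assoc, mul_assoc u (E 1), hEum, ← mul_assoc, ← pow_succ',
        mul_assoc, List.range_succ_eq_map, List.map_cons, List.prod_cons, List.map_map]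
      congr 2
      · congr 1
        push_cast
        ring
      · congr 1
        apply List.map_congr_left
        intro k _
        simp only [Function.comp_apply]
        congr 1
        push_cast
        ring
  have hcast : ((n - 1 : ℕ) : ZMod n) = -1 := by
    rw [Nat.cast_sub (by omega : 1 ≤ n), ZMod.natCast_self, Nat.cast_one, zero_sub]
  have hidx : ∀ k : ℕ, (2 : ZMod n) - ((n - 1 : ℕ) : ZMod n) + k = 3 + (k : ZMod n) := by
    intro k; rw [hcast]; ring
  have hlist : ((List.range (n - 1)).map (fun k : ℕ =>
        E ((2 : ZMod n) - ((n - 1 : ℕ) : ZMod n) + (k : ZMod n)))).prod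
      = ((List.range (n - 1)).map (fun k : ℕ => E (3 + (k : ZMod n)))).prod := by
    congr 1
    apply List.map_congr_left
    intro k _
    rw [hidx]
  have hL : (u * E 1) ^ (n - 1)
      = u ^ (n - 1) * ((List.range (n - 1)).map (fun k : ℕ => E (3 + (k : ZMod n)))).prod := by
    rw [hmain (n - 1), hlist]
  have hR : u ^ n * (u * E 1) = u ^ (n - 1) * (u ^ 2 * E 1) := by
    rw [← mul_assoc, ← pow_succ, ← mul_assoc, ← pow_add]
    congr 2
    omega
  rw [hL, hR]
  -- cancel u ^ (n-1)
  let U : Aˣ := ⟨u, uinv, huu, huu'⟩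
  have hU : u ^ (n - 1) = ((U ^ (n - 1) : Aˣ) : A) := by
    rw [Units.val_pow_eq_pow_val]
  rw [hU]
  exact Units.mul_right_inj (U ^ (n - 1))
end

section
/- In the algebra D_n, every monomial in the generators E_1,…,E_n, u, u^{-1} can be rewritten, using the defining relations, as u^k·m where k ∈ {0,1} and m is a monomial in the E_i alone, unless the monomial is itself a power of u. -/
/-- Ascending list of indices `s, s+1, …, s+m-1` in `ZMod n`. -/
def ascList (n : ℕ) (s : ZMod n) (m : ℕ) : List (ZMod n) :=
  (List.range m).map (fun i : ℕ => s + (i : ZMod n))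

lemma ascList_zero (n : ℕ) (s : ZMod n) : ascList n s 0 = [] := rfl

lemma ascList_cons (n : ℕ) (s : ZMod n) (m : ℕ) :
    ascList n s (m + 1) = s :: ascList n (s + 1) m := by
  unfold ascList
  rw [List.range_succ_eq_map, List.map_cons, List.map_map]
  congr 1
  · simp
  · apply List.map_congr_left
    intro i _
    simp only [Function.comp_apply]
    push_cast
    ring

lemma ascList_snoc (n : ℕ) (s : ZMod n) (m : ℕ) :
    ascList n s (m + 1) = ascList n s m ++ [s + (m : ZMod n)] := by
  simp [ascList, List.range_succ]

lemma ascList_map_add (n : ℕ) (s c : ZMod n) (m : ℕ) :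
    (ascList n s m).map (· + c) = ascList n (s + c) m := by
  simp only [ascList, List.map_map]
  apply List.map_congr_left
  intro i _
  simp only [Function.comp_apply]
  ring

lemma ascList_map_sub_one (n : ℕ) (s : ZMod n) (m : ℕ) :
    (ascList n s m).map (· - 1) = ascList n (s - 1) m := by
  have h : ((· - 1) : ZMod n → ZMod n) = (· + (-1)) := by
    funext x; ring
  rw [h, ascList_map_add, sub_eq_add_neg]

/-- In `D_n`, every monomial (word) in the generators `E_1,…,E_n, u, u⁻¹`
equals, by the defining relations, either a power of `u` (possibly negative, i.e. of the
form `u^a·(u⁻¹)^b`), or a scalar multiple of `u^k · m` with `k ∈ {0,1}` and `m` a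
monomial in the `E_i` alone. -/
theorem extended_affineTL_monomial_normal_form
    {R A : Type*} [CommRing R] [Ring A] [Algebra R A]
    (n : ℕ) (hn : 3 ≤ n) (δ : R) (E : ZMod n → A) (u uinv : A)
    (huu : u * uinv = 1) (huu' : uinv * u = 1)
    (h1 : ∀ i : ZMod n, E i * E i = δ • E i)
    (h2 : ∀ i j : ZMod n, i ≠ j + 1 → i ≠ j - 1 → E i * E j = E j * E i)
    (h3 : ∀ i : ZMod n, E i * E (i + 1) * E i = E i)
    (h3' : ∀ i : ZMod n, E i * E (i - 1) * E i = E i)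
    (h4 : ∀ i : ZMod n, u * E i * uinv = E (i + 1))
    (h5 : (u * E 1) ^ (n - 1) = u ^ n * (u * E 1)) :
    ∀ w : List (ZMod n ⊕ Bool),
      (∃ a b : ℕ,
        (w.map (Sum.elim E (fun s => if s then u else uinv))).prod = u ^ a * uinv ^ b) ∨
      (∃ (r : R) (k : ℕ) (l : List (ZMod n)), k ≤ 1 ∧
        (w.map (Sum.elim E (fun s => if s then u else uinv))).prod
          = r • (u ^ k * (l.map E).prod)) := by
  haveI : NeZero n := ⟨by omega⟩
  -- notation for products of E's
  set P : List (ZMod n) → A := fun l => (l.map E).prod with hPdef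
  have hPnil : P [] = 1 := rfl
  have hPcons : ∀ (j : ZMod n) (l : List (ZMod n)), P (j :: l) = E j * P l := by
    intro j l; simp [hPdef]
  have hPapp : ∀ l1 l2 : List (ZMod n), P (l1 ++ l2) = P l1 * P l2 := by
    intro l1 l2; simp [hPdef]
  have hPsingle : ∀ j : ZMod n, P [j] = E j := by
    intro j; simp [hPdef]
  -- basic commutation rules
  have hcu : ∀ i : ZMod n, u * E i = E (i + 1) * u := by
    intro i
    calc u * E i = (u * E i * uinv) * u := by
          rw [mul_assoc (u * E i), huu', mul_one]
      _ = E (i + 1) * u := by rw [h4]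
  have hcui : ∀ i : ZMod n, uinv * E i = E (i - 1) * uinv := by
    intro i
    have h := h4 (i - 1)
    rw [sub_add_cancel] at h
    calc uinv * E i = uinv * (u * E (i - 1) * uinv) := by rw [h]
      _ = (uinv * u) * E (i - 1) * uinv := by
          rw [← mul_assoc, ← mul_assoc]
      _ = E (i - 1) * uinv := by rw [huu', one_mul]
  have hEu : ∀ i : ZMod n, E i * u = u * E (i - 1) := by
    intro i
    rw [hcu (i - 1), sub_add_cancel]
  have hEui : ∀ i : ZMod n, E i * uinv = uinv * E (i + 1) := by
    intro i
    rw [hcui (i + 1), add_sub_cancel_right]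
  -- powers of u against uinv
  have hpw : ∀ m : ℕ, u ^ m * uinv ^ m = 1 := by
    intro m
    induction m with
    | zero => simp
    | succ m ih =>
        rw [pow_succ, pow_succ']
        calc u ^ m * u * (uinv * uinv ^ m)
            = u ^ m * (u * uinv) * uinv ^ m := by noncomm_ring
          _ = 1 := by rw [huu, mul_one, ih]
  have hpw' : ∀ m : ℕ, uinv ^ m * u ^ m = 1 := by
    intro m
    induction m with
    | zero => simp
    | succ m ih =>
        rw [pow_succ, pow_succ']
        calc uinv ^ m * uinv * (u * u ^ m)
            = uinv ^ m * (uinv * u) * u ^ m := by noncomm_ring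
          _ = 1 := by rw [huu', mul_one, ih]
  -- E past powers of u / uinv
  have hEpu : ∀ (a : ℕ) (i : ZMod n), E i * u ^ a = u ^ a * E (i - a) := by
    intro a
    induction a with
    | zero => intro i; simp
    | succ a ih =>
        intro i
        rw [pow_succ, ← mul_assoc, ih i, mul_assoc, hEu, ← mul_assoc, ← pow_succ]
        congr 1
        push_cast
        ring
  have hEpui : ∀ (b : ℕ) (i : ZMod n), E i * uinv ^ b = uinv ^ b * E (i + b) := by
    intro b
    induction b with
    | zero => intro i; simp
    | succ b ih =>
        intro i
        rw [pow_succ, ← mul_assoc, ih i, mul_assoc, hEui, ← mul_assoc, ← pow_succ]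
        congr 1
        push_cast
        ring
  -- uinv commutes with powers of u
  have hCuu : Commute uinv u := by
    show uinv * u = u * uinv
    rw [huu', huu]
  have hcomm : ∀ a : ℕ, uinv * u ^ a = u ^ a * uinv := fun a => (hCuu.pow_right a).eq
  -- P past u
  have hPu : ∀ l : List (ZMod n), P l * u = u * P (l.map (· - 1)) := by
    intro l
    induction l with
    | nil => simp [hPnil]
    | cons j t ih =>
        simp only [List.map_cons, hPcons]
        rw [mul_assoc, ih, ← mul_assoc, hEu, mul_assoc]
  -- conjugation by u^k
  have hconjE : ∀ (k : ℕ) (i : ZMod n), u ^ k * E i * uinv ^ k = E (i + k) := by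
    intro k
    induction k with
    | zero => intro i; simp
    | succ k ih =>
        intro i
        have hre : u ^ (k + 1) * E i * uinv ^ (k + 1)
            = u * (u ^ k * E i * uinv ^ k) * uinv := by
          rw [pow_succ', pow_succ]
          noncomm_ring
        rw [hre, ih i, h4]
        congr 1
        push_cast
        ring
  have hconjP : ∀ (k : ℕ) (l : List (ZMod n)),
      u ^ k * P l * uinv ^ k = P (l.map (· + (k : ZMod n))) := by
    intro k l
    induction l with
    | nil => simp [hPnil, hpw]
    | cons j t ih =>
        simp only [List.map_cons, hPcons]
        have h' : u ^ k * (E j * P t) * uinv ^ k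
            = (u ^ k * E j * uinv ^ k) * (u ^ k * P t * uinv ^ k) := by
          calc u ^ k * (E j * P t) * uinv ^ k
              = u ^ k * E j * (uinv ^ k * u ^ k) * P t * uinv ^ k := by
                rw [hpw' k, mul_one]
                noncomm_ring
            _ = (u ^ k * E j * uinv ^ k) * (u ^ k * P t * uinv ^ k) := by
                calc u ^ k * E j * (uinv ^ k * u ^ k) * P t * uinv ^ k
                    = u ^ k * E j * uinv ^ k * (u ^ k * (P t * uinv ^ k)) := by
                      noncomm_ring
                  _ = (u ^ k * E j * uinv ^ k) * (u ^ k * P t * uinv ^ k) := by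
                      rw [mul_assoc (u ^ k) (P t) (uinv ^ k)]
        rw [h', hconjE, ih]
  -- Step 1 : every word is  u^a * uinv^b * P l
  have hFE : ∀ i : ZMod n,
      (Sum.elim E (fun s : Bool => if s then u else uinv)) (Sum.inl i) = E i := fun _ => rfl
  have hFu : (Sum.elim E (fun s : Bool => if s then u else uinv)) (Sum.inr true) = u := rfl
  have hFui : (Sum.elim E (fun s : Bool => if s then u else uinv)) (Sum.inr false) = uinv := rfl
  have step1 : ∀ w : List (ZMod n ⊕ Bool),
      ∃ (a b : ℕ) (l : List (ZMod n)),
        (w.map (Sum.elim E (fun s => if s then u else uinv))).prod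
          = u ^ a * uinv ^ b * P l := by
    intro w
    induction w with
    | nil => exact ⟨0, 0, [], by simp [hPnil]⟩
    | cons x t ih =>
        obtain ⟨a, b, l, hl⟩ := ih
        rcases x with i | s
        · refine ⟨a, b, (i - a + b) :: l, ?_⟩
          rw [List.map_cons, List.prod_cons, hFE, hl]
          calc E i * (u ^ a * uinv ^ b * P l)
              = (E i * u ^ a) * uinv ^ b * P l := by noncomm_ring
            _ = u ^ a * (E (i - a) * uinv ^ b) * P l := by
                rw [hEpu a i]; noncomm_ring
            _ = u ^ a * (uinv ^ b * E (i - a + b)) * P l := by rw [hEpui b]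
            _ = u ^ a * uinv ^ b * P ((i - a + b) :: l) := by
                rw [hPcons]; noncomm_ring
        · rcases s with _ | _
          · -- uinv
            refine ⟨a, b + 1, l, ?_⟩
            rw [List.map_cons, List.prod_cons, hFui, hl]
            calc uinv * (u ^ a * uinv ^ b * P l)
                = (uinv * u ^ a) * uinv ^ b * P l := by noncomm_ring
              _ = u ^ a * (uinv * uinv ^ b) * P l := by rw [hcomm]; noncomm_ring
              _ = u ^ a * uinv ^ (b + 1) * P l := by rw [← pow_succ']
          · -- u
            refine ⟨a + 1, b, l, ?_⟩
            rw [List.map_cons, List.prod_cons, hFu, hl]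
            calc u * (u ^ a * uinv ^ b * P l)
                = (u * u ^ a) * uinv ^ b * P l := by noncomm_ring
              _ = u ^ (a + 1) * uinv ^ b * P l := by rw [← pow_succ']
  -- cast facts
  have hc1 : ((n - 1 : ℕ) : ZMod n) = -1 := by
    rw [Nat.cast_sub (by omega : 1 ≤ n), ZMod.natCast_self]
    ring
  have hc2 : ((n - 2 : ℕ) : ZMod n) = -2 := by
    rw [Nat.cast_sub (by omega : 2 ≤ n), ZMod.natCast_self]
    push_cast
    ring
  -- (u E1)^m = u^m * P (ascList (2 - m) m)
  have hUE : ∀ m : ℕ, (u * E 1) ^ m = u ^ m * P (ascList n (2 - (m : ZMod n)) m) := by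
    intro m
    induction m with
    | zero => simp [ascList_zero, hPnil]
    | succ m ih =>
        rw [pow_succ, ih]
        calc u ^ m * P (ascList n (2 - (m : ZMod n)) m) * (u * E 1)
            = u ^ m * (P (ascList n (2 - (m : ZMod n)) m) * u) * E 1 := by
              noncomm_ring
          _ = u ^ m * (u * P (ascList n (2 - (m : ZMod n) - 1) m)) * E 1 := by
              rw [hPu, ascList_map_sub_one]
          _ = u ^ (m + 1) * (P (ascList n (2 - (m : ZMod n) - 1) m) * E 1) := by
              rw [pow_succ]; noncomm_ring
          _ = u ^ (m + 1) * P (ascList n (2 - ((m + 1 : ℕ) : ZMod n)) (m + 1)) := by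
              congr 1
              have hs : (2 - ((m + 1 : ℕ) : ZMod n)) = 2 - (m : ZMod n) - 1 := by
                push_cast; ring
              rw [hs, ascList_snoc, hPapp]
              have h1' : (2 - (m : ZMod n) - 1) + (m : ZMod n) = 1 := by ring
              rw [h1', hPsingle]
  -- the key relation: u^2 * E 1 = P (ascList 3 (n-1))
  have key1 : u ^ 2 * E 1 = P (ascList n 3 (n - 1)) := by
    have hh := h5
    rw [hUE (n - 1)] at hh
    have hstart : (2 - ((n - 1 : ℕ) : ZMod n)) = 3 := by rw [hc1]; ring
    rw [hstart] at hh
    -- hh : u^(n-1) * P (ascList n 3 (n-1)) = u^n * (u * E 1)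
    have hrhs : u ^ n * (u * E 1) = u ^ (n - 1) * (u ^ 2 * E 1) := by
      have hpow : u ^ n * u = u ^ (n - 1) * u ^ 2 := by
        rw [← pow_succ, ← pow_add]
        congr 1
        omega
      rw [← mul_assoc, hpow, mul_assoc]
    rw [hrhs] at hh
    have hfin := congrArg (fun x => uinv ^ (n - 1) * x) hh
    simpa [← mul_assoc, hpw' (n - 1), one_mul] using hfin.symm
  -- general key relation for any index
  have keyC : ∀ j : ZMod n, u ^ 2 * E j = P (ascList n (j + 2) (n - 1)) := by
    intro j
    set k : ℕ := (j - 1).val with hk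
    have hkj : ((k : ℕ) : ZMod n) = j - 1 := by
      simp [hk, ZMod.natCast_val, ZMod.cast_id]
    have hEj : E j = u ^ k * E 1 * uinv ^ k := by
      rw [hconjE k 1, hkj]
      congr 1
      ring
    rw [hEj]
    calc u ^ 2 * (u ^ k * E 1 * uinv ^ k)
        = (u ^ 2 * u ^ k) * E 1 * uinv ^ k := by noncomm_ring
      _ = (u ^ k * u ^ 2) * E 1 * uinv ^ k := by
          rw [← pow_add, ← pow_add, Nat.add_comm]
      _ = u ^ k * (u ^ 2 * E 1) * uinv ^ k := by noncomm_ring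
      _ = u ^ k * P (ascList n 3 (n - 1)) * uinv ^ k := by rw [key1]
      _ = P ((ascList n 3 (n - 1)).map (· + (k : ZMod n))) := by rw [hconjP]
      _ = P (ascList n (j + 2) (n - 1)) := by
          rw [ascList_map_add, hkj]
          congr 2
          ring
  -- palindrome lemma
  have hpal : ∀ (m : ℕ) (k : ZMod n),
      E k = P (ascList n k m) * E (k + m) * P ((ascList n k m).reverse) := by
    intro m
    induction m with
    | zero => intro k; simp [ascList_zero, hPnil]
    | succ m ih =>
        intro k
        have hmid : E (k + (m : ZMod n)) =
            E (k + m) * E (k + m + 1) * E (k + m) := (h3 (k + m)).symm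
        calc E k = P (ascList n k m) * E (k + m) * P ((ascList n k m).reverse) :=
              ih k
          _ = P (ascList n k m) * (E (k + m) * E (k + m + 1) * E (k + m))
                * P ((ascList n k m).reverse) := by rw [← hmid]
          _ = (P (ascList n k m) * E (k + m)) * E (k + m + 1)
                * (E (k + m) * P ((ascList n k m).reverse)) := by noncomm_ring
          _ = P (ascList n k (m + 1)) * E (k + ((m + 1 : ℕ) : ZMod n))
                * P ((ascList n k (m + 1)).reverse) := by
              have hcst : k + ((m + 1 : ℕ) : ZMod n) = k + (m : ZMod n) + 1 := by
                push_cast; ring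
              rw [hcst]
              simp only [ascList_snoc, List.reverse_append, List.reverse_cons,
                List.reverse_nil, List.nil_append, List.singleton_append,
                hPapp, hPcons, hPnil, mul_one, one_mul]
  -- key relation for uinv^2
  have keyD : ∀ k : ZMod n,
      uinv ^ 2 * E k = P ((k - 2) :: (ascList n k (n - 2)).reverse) := by
    intro k
    have hp := hpal (n - 2) k
    rw [hc2] at hp
    have hfront : P (ascList n k (n - 2)) * E (k + -2) = u ^ 2 * E (k - 2) := by
      have hkc := keyC (k - 2)
      have harg : k - 2 + 2 = k := by ring
      rw [harg] at hkc
      have hn1 : n - 1 = (n - 2) + 1 := by omega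
      rw [hn1, ascList_snoc, hPapp, hPsingle] at hkc
      rw [hkc]
      congr 2
      rw [hc2]
    calc uinv ^ 2 * E k
        = uinv ^ 2 * (P (ascList n k (n - 2)) * E (k + -2)
            * P ((ascList n k (n - 2)).reverse)) := by rw [← hp]
      _ = (uinv ^ 2 * (u ^ 2 * E (k - 2)))
            * P ((ascList n k (n - 2)).reverse) := by
          rw [hfront]; noncomm_ring
      _ = E (k - 2) * P ((ascList n k (n - 2)).reverse) := by
          rw [← mul_assoc, hpw' 2, one_mul]
      _ = P ((k - 2) :: (ascList n k (n - 2)).reverse) := by rw [hPcons]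
  -- cons forms of the key relation
  have keyC' : ∀ j : ZMod n,
      u ^ 2 * E j = P ((j + 2) :: ascList n (j + 3) (n - 2)) := by
    intro j
    rw [keyC j]
    congr 1
    have hn1 : n - 1 = (n - 2) + 1 := by omega
    have hadd : j + 2 + 1 = j + 3 := by ring
    rw [hn1, ascList_cons, hadd]
  -- positive reduction
  have redpos : ∀ (t : ℕ) (j : ZMod n) (rest : List (ZMod n)),
      ∃ (k : ℕ) (l : List (ZMod n)), k ≤ 1 ∧
        u ^ t * P (j :: rest) = u ^ k * P l := by
    intro t
    induction t using Nat.strong_induction_on with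
    | _ t ih =>
      intro j rest
      rcases Nat.lt_or_ge t 2 with hlt | hge
      · exact ⟨t, j :: rest, by omega, rfl⟩
      · obtain ⟨t', rfl⟩ : ∃ t', t = t' + 2 := ⟨t - 2, by omega⟩
        have hstep : u ^ (t' + 2) * P (j :: rest)
            = u ^ t' * P ((j + 2) :: (ascList n (j + 3) (n - 2) ++ rest)) := by
          calc u ^ (t' + 2) * P (j :: rest)
              = u ^ t' * (u ^ 2 * E j) * P rest := by
                rw [pow_add, hPcons]; noncomm_ring
            _ = u ^ t' * P ((j + 2) :: ascList n (j + 3) (n - 2)) * P rest := by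
                rw [keyC']
            _ = u ^ t' * P ((j + 2) :: (ascList n (j + 3) (n - 2) ++ rest)) := by
                rw [mul_assoc, ← hPapp, List.cons_append]
        obtain ⟨k, l, hk, hl⟩ :=
          ih t' (by omega) (j + 2) (ascList n (j + 3) (n - 2) ++ rest)
        exact ⟨k, l, hk, by rw [hstep, hl]⟩
  -- negative reduction
  have redneg : ∀ (t : ℕ) (j : ZMod n) (rest : List (ZMod n)),
      ∃ (k : ℕ) (l : List (ZMod n)), k ≤ 1 ∧
        uinv ^ t * P (j :: rest) = u ^ k * P l := by
    intro t
    induction t using Nat.strong_induction_on with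
    | _ t ih =>
      intro j rest
      match t with
      | 0 => exact ⟨0, j :: rest, by omega, by simp⟩
      | 1 =>
          refine ⟨1, (j - 2) :: ((ascList n j (n - 2)).reverse ++ rest), by omega, ?_⟩
          have huinv : uinv = u * uinv ^ 2 := by
            rw [pow_two, ← mul_assoc, huu, one_mul]
          calc uinv ^ 1 * P (j :: rest)
              = u * (uinv ^ 2 * E j) * P rest := by
                rw [pow_one, hPcons]
                nth_rewrite 1 [huinv]
                noncomm_ring
            _ = u * P ((j - 2) :: (ascList n j (n - 2)).reverse) * P rest := by
                rw [keyD]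
            _ = u ^ 1 * P ((j - 2) :: ((ascList n j (n - 2)).reverse ++ rest)) := by
                rw [pow_one, mul_assoc, ← hPapp, List.cons_append]
      | (t' + 2) =>
          have hstep : uinv ^ (t' + 2) * P (j :: rest)
              = uinv ^ t' * P ((j - 2) :: ((ascList n j (n - 2)).reverse ++ rest)) := by
            calc uinv ^ (t' + 2) * P (j :: rest)
                = uinv ^ t' * (uinv ^ 2 * E j) * P rest := by
                  rw [pow_add, hPcons]; noncomm_ring
              _ = uinv ^ t' * P ((j - 2) :: (ascList n j (n - 2)).reverse) * P rest := by
                  rw [keyD]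
              _ = uinv ^ t' * P ((j - 2) :: ((ascList n j (n - 2)).reverse ++ rest)) := by
                  rw [mul_assoc, ← hPapp, List.cons_append]
          obtain ⟨k, l, hk, hl⟩ :=
            ih t' (by omega) (j - 2) ((ascList n j (n - 2)).reverse ++ rest)
          exact ⟨k, l, hk, by rw [hstep, hl]⟩
  -- final assembly
  intro w
  obtain ⟨a, b, l, hl⟩ := step1 w
  rcases l with _ | ⟨j, t⟩
  · left
    exact ⟨a, b, by rw [hl, hPnil, mul_one]⟩
  · right
    rcases le_or_gt b a with hba | hab
    · -- u^a * uinv^b = u^(a-b)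
      have hcollapse : u ^ a * uinv ^ b = u ^ (a - b) := by
        have hsplit : a = (a - b) + b := by omega
        conv_lhs => rw [hsplit]
        rw [pow_add, mul_assoc, hpw b, mul_one]
      obtain ⟨k, l', hk, hred⟩ := redpos (a - b) j t
      refine ⟨1, k, l', hk, ?_⟩
      rw [hl, hcollapse, hred, one_smul]
    · -- u^a * uinv^b = uinv^(b-a)
      have hcollapse : u ^ a * uinv ^ b = uinv ^ (b - a) := by
        have hsplit : b = a + (b - a) := by omega
        conv_lhs => rw [hsplit]
        rw [pow_add, ← mul_assoc, hpw a, one_mul]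
      obtain ⟨k, l', hk, hred⟩ := redneg (b - a) j t
      refine ⟨1, k, l', hk, ?_⟩
      rw [hl, hcollapse, hred, one_smul]
end

section
/- The subalgebra O_n of D_n generated by the elements E_1,…,E_n together with all even powers u^{2m}, m ∈ ℤ, equals the fixed-point subalgebra of the automorphism ε (which fixes each E_i and negates u). -/
noncomputable section

/-- Generator `E_i` in the free algebra on `E_1,…,E_n, u, u⁻¹`. -/
def DnGenE (R : Type*) [CommRing R] (n : ℕ) (i : ZMod n) :
    FreeAlgebra R (ZMod n ⊕ Bool) :=
  FreeAlgebra.ι R (Sum.inl i)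

/-- Generator `u`. -/
def DnGenU (R : Type*) [CommRing R] (n : ℕ) : FreeAlgebra R (ZMod n ⊕ Bool) :=
  FreeAlgebra.ι R (Sum.inr true)

/-- Generator `u⁻¹`. -/
def DnGenUinv (R : Type*) [CommRing R] (n : ℕ) : FreeAlgebra R (ZMod n ⊕ Bool) :=
  FreeAlgebra.ι R (Sum.inr false)

/-- The defining relations (1)–(5) of the extended affine Temperley–Lieb algebra `D_n`. -/
inductive DnRel (R : Type*) [CommRing R] (n : ℕ) (δ : R) :
    FreeAlgebra R (ZMod n ⊕ Bool) → FreeAlgebra R (ZMod n ⊕ Bool) → Prop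
  | inv_right : DnRel R n δ (DnGenU R n * DnGenUinv R n) 1
  | inv_left : DnRel R n δ (DnGenUinv R n * DnGenU R n) 1
  | sq (i : ZMod n) : DnRel R n δ (DnGenE R n i * DnGenE R n i) (δ • DnGenE R n i)
  | comm (i j : ZMod n) (h1 : i ≠ j + 1) (h2 : i ≠ j - 1) :
      DnRel R n δ (DnGenE R n i * DnGenE R n j) (DnGenE R n j * DnGenE R n i)
  | braid_up (i : ZMod n) :
      DnRel R n δ (DnGenE R n i * DnGenE R n (i + 1) * DnGenE R n i) (DnGenE R n i)
  | braid_down (i : ZMod n) :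
      DnRel R n δ (DnGenE R n i * DnGenE R n (i - 1) * DnGenE R n i) (DnGenE R n i)
  | conj (i : ZMod n) :
      DnRel R n δ (DnGenU R n * DnGenE R n i * DnGenUinv R n) (DnGenE R n (i + 1))
  | wind : DnRel R n δ ((DnGenU R n * DnGenE R n 1) ^ (n - 1))
      (DnGenU R n ^ n * (DnGenU R n * DnGenE R n 1))

/-- The extended affine Temperley–Lieb algebra `D_n`, as the quotient of the free
algebra by the relations (1)–(5). -/
def Dn (R : Type*) [CommRing R] (n : ℕ) (δ : R) := RingQuot (DnRel R n δ)

instance (R : Type*) [CommRing R] (n : ℕ) (δ : R) : Ring (Dn R n δ) :=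
  inferInstanceAs (Ring (RingQuot (DnRel R n δ)))

instance (R : Type*) [CommRing R] (n : ℕ) (δ : R) : Algebra R (Dn R n δ) :=
  inferInstanceAs (Algebra R (RingQuot (DnRel R n δ)))

/-- The image of `E_i` in `D_n`. -/
def DnE (R : Type*) [CommRing R] (n : ℕ) (δ : R) (i : ZMod n) : Dn R n δ :=
  RingQuot.mkAlgHom R (DnRel R n δ) (DnGenE R n i)

/-- The image of `u` in `D_n`. -/
def DnU (R : Type*) [CommRing R] (n : ℕ) (δ : R) : Dn R n δ :=
  RingQuot.mkAlgHom R (DnRel R n δ) (DnGenU R n)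

/-- The image of `u⁻¹` in `D_n`. -/
def DnUinv (R : Type*) [CommRing R] (n : ℕ) (δ : R) : Dn R n δ :=
  RingQuot.mkAlgHom R (DnRel R n δ) (DnGenUinv R n)


/-- The subalgebra `O_n` of `D_n` generated by `E_1,…,E_n` together with
all even powers `u^{2m}`, `m ∈ ℤ` (i.e. `u^{2m}` and `(u⁻¹)^{2m}` for `m ∈ ℕ`), equals
the fixed-point subalgebra of the involutive automorphism `ε` (which fixes each `E_i`
and negates `u` and `u⁻¹`). -/
theorem On_eq_fixed_points_of_epsilon
    (K : Type*) [Field K] (hchar : (2 : K) ≠ 0)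
    (n : ℕ) (hn : 3 ≤ n) (δ : K)
    (ε : Dn K n δ ≃ₐ[K] Dn K n δ)
    (hE : ∀ i : ZMod n, ε (DnE K n δ i) = DnE K n δ i)
    (hU : ε (DnU K n δ) = - DnU K n δ)
    (hUinv : ε (DnUinv K n δ) = - DnUinv K n δ) :
    ∀ x : Dn K n δ,
      x ∈ Algebra.adjoin K
          (Set.range (DnE K n δ) ∪
            {y : Dn K n δ | ∃ m : ℕ,
              y = DnU K n δ ^ (2 * m) ∨ y = DnUinv K n δ ^ (2 * m)})
        ↔ ε x = x := by
  intro x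
  set u := DnU K n δ with hu_def
  set v := DnUinv K n δ with hv_def
  set E := DnE K n δ with hE_def
  set f := RingQuot.mkAlgHom K (DnRel K n δ) with hf_def
  set S : Set (Dn K n δ) :=
      (Set.range E ∪ {y : Dn K n δ | ∃ m : ℕ, y = u ^ (2 * m) ∨ y = v ^ (2 * m)})
    with hS_def
  set A := Algebra.adjoin K S with hA_def
  -- basic relations in Dn
  have huv : u * v = 1 := by
    have h := RingQuot.mkAlgHom_rel K (DnRel.inv_right (R := K) (n := n) (δ := δ))
    rw [map_mul, map_one] at h
    exact h
  have hvu : v * u = 1 := by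
    have h := RingQuot.mkAlgHom_rel K (DnRel.inv_left (R := K) (n := n) (δ := δ))
    rw [map_mul, map_one] at h
    exact h
  have hconj : ∀ i : ZMod n, u * E i * v = E (i + 1) := by
    intro i
    have h := RingQuot.mkAlgHom_rel K (DnRel.conj (R := K) (n := n) (δ := δ) i)
    rw [map_mul, map_mul] at h
    exact h
  have key1 : ∀ z : Dn K n δ, u * (v * z) = z := fun z => by
    rw [← mul_assoc, huv, one_mul]
  have key2 : ∀ z : Dn K n δ, v * (u * z) = z := fun z => by
    rw [← mul_assoc, hvu, one_mul]
  have hcomm_uv : Commute u v := huv.trans hvu.symm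
  -- membership of generators
  have hEmem : ∀ i, E i ∈ A := fun i => Algebra.subset_adjoin (Or.inl ⟨i, rfl⟩)
  have humem : ∀ m : ℕ, u ^ (2 * m) ∈ A := fun m =>
    Algebra.subset_adjoin (Or.inr ⟨m, Or.inl rfl⟩)
  have hvmem : ∀ m : ℕ, v ^ (2 * m) ∈ A := fun m =>
    Algebra.subset_adjoin (Or.inr ⟨m, Or.inr rfl⟩)
  -- epsilon fixes A pointwise
  have hAfix : ∀ a ∈ A, ε a = a := by
    intro a ha
    induction ha using Algebra.adjoin_induction with
    | mem z hz =>
      rcases hz with ⟨i, rfl⟩ | ⟨m, rfl | rfl⟩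
      · exact hE i
      · rw [map_pow, hU, Even.neg_pow (even_two_mul m)]
      · rw [map_pow, hUinv, Even.neg_pow (even_two_mul m)]
    | algebraMap r => exact ε.commutes r
    | add x y hx hy ihx ihy => rw [map_add, ihx, ihy]
    | mul x y hx hy ihx ihy => rw [map_mul, ihx, ihy]
  -- conjugation by u preserves A
  have hconjA : ∀ a ∈ A, u * a * v ∈ A := by
    intro a ha
    induction ha using Algebra.adjoin_induction with
    | mem z hz =>
      rcases hz with ⟨i, rfl⟩ | ⟨m, rfl | rfl⟩
      · rw [hconj]; exact hEmem _
      · have : u * u ^ (2 * m) * v = u ^ (2 * m) := by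
          rw [((Commute.refl u).pow_right (2*m)).eq, mul_assoc, huv, mul_one]
        rw [this]; exact humem m
      · have : u * v ^ (2 * m) * v = v ^ (2 * m) := by
          rw [(hcomm_uv.pow_right (2*m)).eq, mul_assoc, huv, mul_one]
        rw [this]; exact hvmem m
    | algebraMap r =>
      have : u * algebraMap K (Dn K n δ) r * v = algebraMap K (Dn K n δ) r := by
        rw [← Algebra.commutes r u, mul_assoc, huv, mul_one]
      rw [this]; exact Subalgebra.algebraMap_mem A r
    | add x y hx hy ihx ihy => rw [mul_add, add_mul]; exact add_mem ihx ihy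
    | mul x y hx hy ihx ihy =>
      have : u * (x * y) * v = (u * x * v) * (u * y * v) := by
        simp only [mul_assoc, key1, key2]
      rw [this]; exact mul_mem ihx ihy
  -- conjugation by v preserves A
  have hconjA' : ∀ a ∈ A, v * a * u ∈ A := by
    intro a ha
    induction ha using Algebra.adjoin_induction with
    | mem z hz =>
      rcases hz with ⟨i, rfl⟩ | ⟨m, rfl | rfl⟩
      · have : v * E i * u = E (i - 1) := by
          have h := hconj (i - 1)
          rw [sub_add_cancel] at h
          rw [← h]
          simp only [mul_assoc, key1, key2, huv, hvu, mul_one]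
        rw [this]; exact hEmem _
      · have : v * u ^ (2 * m) * u = u ^ (2 * m) := by
          rw [(hcomm_uv.symm.pow_right (2*m)).eq, mul_assoc, hvu, mul_one]
        rw [this]; exact humem m
      · have : v * v ^ (2 * m) * u = v ^ (2 * m) := by
          rw [((Commute.refl v).pow_right (2*m)).eq, mul_assoc, hvu, mul_one]
        rw [this]; exact hvmem m
    | algebraMap r =>
      have : v * algebraMap K (Dn K n δ) r * u = algebraMap K (Dn K n δ) r := by
        rw [← Algebra.commutes r v, mul_assoc, hvu, mul_one]
      rw [this]; exact Subalgebra.algebraMap_mem A r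
    | add x y hx hy ihx ihy => rw [mul_add, add_mul]; exact add_mem ihx ihy
    | mul x y hx hy ihx ihy =>
      have : v * (x * y) * u = (v * x * u) * (v * y * u) := by
        simp only [mul_assoc, key1, key2]
      rw [this]; exact mul_mem ihx ihy
  -- every element of Dn is a + u * b with a, b in A
  have main : ∀ y : FreeAlgebra K (ZMod n ⊕ Bool),
      ∃ a ∈ A, ∃ b ∈ A, f y = a + u * b := by
    intro y
    induction y using FreeAlgebra.induction with
    | grade0 r =>
      refine ⟨algebraMap K (Dn K n δ) r, Subalgebra.algebraMap_mem A r, 0,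
        Subalgebra.zero_mem A, ?_⟩
      rw [AlgHom.commutes, mul_zero, add_zero]; rfl
    | grade1 z =>
      rcases z with i | b
      · exact ⟨E i, hEmem i, 0, Subalgebra.zero_mem A, by rw [mul_zero, add_zero]; rfl⟩
      · rcases b with _ | _
        · -- u⁻¹ generator : v = 0 + u * v^2
          refine ⟨0, Subalgebra.zero_mem A, v ^ 2, by simpa using hvmem 1, ?_⟩
          rw [zero_add, pow_two, ← mul_assoc, huv, one_mul]; rfl
        · exact ⟨0, Subalgebra.zero_mem A, 1, Subalgebra.one_mem A,
            by rw [mul_one, zero_add]; rfl⟩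
    | mul p q ihp ihq =>
      obtain ⟨a, ha, b, hb, hab⟩ := ihp
      obtain ⟨c, hc, d, hd, hcd⟩ := ihq
      refine ⟨a * c + u ^ 2 * ((v * b * u) * d),
        add_mem (mul_mem ha hc)
          (mul_mem (by simpa using humem 1) (mul_mem (hconjA' b hb) hd)),
        (v * a * u) * d + b * c,
        add_mem (mul_mem (hconjA' a ha) hd) (mul_mem hb hc), ?_⟩
      rw [map_mul, hab, hcd]
      change (a + u * b) * (c + u * d) = _
      simp only [mul_add, add_mul, mul_assoc, key1, key2, pow_two]
      abel
    | add p q ihp ihq =>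
      obtain ⟨a, ha, b, hb, hab⟩ := ihp
      obtain ⟨c, hc, d, hd, hcd⟩ := ihq
      refine ⟨a + c, add_mem ha hc, b + d, add_mem hb hd, ?_⟩
      rw [map_add, hab, hcd, mul_add]
      abel
  constructor
  · exact fun hx => hAfix x hx
  · intro hx
    obtain ⟨y, rfl⟩ := RingQuot.mkAlgHom_surjective K (DnRel K n δ) x
    obtain ⟨a, ha, b, hb, hab⟩ := main y
    rw [hab] at hx ⊢
    rw [map_add, map_mul, hU, hAfix a ha, hAfix b hb, neg_mul] at hx
    have hub : u * b = 0 := by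
      have h2 : (2 : K) • (u * b) = 0 := by
        have h := add_left_cancel hx
        rw [two_smul]
        nth_rewrite 1 [← h]
        exact neg_add_cancel _
      have := congrArg (fun z => (2 : K)⁻¹ • z) h2
      simpa [smul_smul, inv_mul_cancel₀ hchar] using this
    rw [hub, add_zero]
    exact ha


end
end

section
/- Let A be a K-algebra with a cell datum (Λ, M, C, *) in the sense of Graham–Lehrer, where Λ is a finite poset. Suppose for λ ∈ Λ the bilinear form φ_λ on the cell module W(λ) (defined by C_{S,T}C_{U,V} ≡ φ_λ(T,U)C_{S,V} mod A(<λ)) is nonzero. Then the quotient of W(λ) by the radical of φ_λ is a simple A-module. -/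
/-- Let `A` be a `K`-algebra with a Graham–Lehrer cell datum
`(Λ, M, C, *)`, `Λ` a finite poset.  Fix `l ∈ Λ` and suppose the bilinear form `φ_l`
on the cell module `W(l)` (defined by `C_{S,T} C_{U,V} ≡ φ_l(T,U) C_{S,V} mod A(<l)`)
is nonzero.  Then the quotient of `W(l)` by the radical of `φ_l` is a simple
`A`-module. -/
theorem cellular_cell_module_quotient_radical_simple
    {K A : Type*} [Field K] [Ring A] [Algebra K A]
    {Λ : Type*} [PartialOrder Λ] [Finite Λ]
    {M : Λ → Type*} [∀ l, Fintype (M l)]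
    -- the cellular basis
    (C : ∀ l : Λ, M l → M l → A)
    (B : Module.Basis ((l : Λ) × (M l × M l)) K A)
    (hB : ∀ (l : Λ) (S T : M l), B ⟨l, (S, T)⟩ = C l S T)
    -- the anti-involution *
    (star : A →ₗ[K] A)
    (hstar_mul : ∀ x y : A, star (x * y) = star y * star x)
    (hstar_inv : ∀ x : A, star (star x) = x)
    (hstar_C : ∀ (l : Λ) (S T : M l), star (C l S T) = C l T S)
    -- the structure constants of the cellular structure
    (r : A → ∀ l : Λ, M l → M l → K)
    (hcell : ∀ (a : A) (l : Λ) (S T : M l),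
      a * C l S T - ∑ S' : M l, r a l S' S • C l S' T ∈
        Submodule.span K {x : A | ∃ m : Λ, m < l ∧ ∃ U V : M m, x = C m U V})
    -- the fixed cell `l` and its bilinear form `φ`
    (l : Λ) (φ : M l → M l → K)
    (hφ : ∀ S T U V : M l,
      C l S T * C l U V - φ T U • C l S V ∈
        Submodule.span K {x : A | ∃ m : Λ, m < l ∧ ∃ U' V' : M m, x = C m U' V'})
    (hφ_ne : ∃ T U : M l, φ T U ≠ 0)
    -- the cell module `W(l)`
    {W : Type*} [AddCommGroup W] [Module K W] [Module A W] [IsScalarTower K A W]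
    (CW : Module.Basis (M l) K W)
    (hact : ∀ (a : A) (S : M l), a • CW S = ∑ S' : M l, r a l S' S • CW S')
    -- the bilinear form on `W(l)` induced by `φ`
    (Φ : W →ₗ[K] W →ₗ[K] K)
    (hΦ : ∀ S T : M l, Φ (CW S) (CW T) = φ S T) :
    ∀ N : Submodule A W, (N : Set W) = {w : W | ∀ v : W, Φ w v = 0} →
      IsSimpleModule A (W ⧸ N) := by
  intro N hN
  classical
  set Lset : Set A := {x : A | ∃ m : Λ, m < l ∧ ∃ U V : M m, x = C m U V} with hLset
  -- coefficient extraction: elements of the span of lower cells have zero coordinates at level l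
  have hrepr : ∀ x ∈ Submodule.span K Lset, ∀ S T : M l,
      B.repr x ⟨l, (S, T)⟩ = 0 := by
    intro x hx S T
    have hle : Submodule.span K Lset ≤ LinearMap.ker
        ((Finsupp.lapply (⟨l, (S, T)⟩ : (m : Λ) × (M m × M m))).comp
          B.repr.toLinearMap) := by
      rw [Submodule.span_le]
      rintro y ⟨m, hm, U, V, rfl⟩
      simp only [SetLike.mem_coe, LinearMap.mem_ker, LinearMap.comp_apply,
        LinearEquiv.coe_toLinearMap, Finsupp.lapply_apply]
      rw [← hB, B.repr_self, Finsupp.single_apply, if_neg]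
      intro h
      exact absurd (congrArg Sigma.fst h) (ne_of_lt hm)
    simpa using hle hx
  -- the structure constants of C l S T
  have hr : ∀ S T S' U : M l, r (C l S T) l S' U = if S' = S then φ T U else 0 := by
    intro S T S' U
    have h1 := hcell (C l S T) l U U
    have h2 := hφ S T U U
    have h3 : (∑ S'' : M l, r (C l S T) l S'' U • C l S'' U) - φ T U • C l S U ∈
        Submodule.span K Lset := by
      have := Submodule.sub_mem _ h2 h1
      rw [sub_sub_sub_cancel_left] at this
      exact this
    have h4 := hrepr _ h3 S' U
    rw [map_sub, map_sum] at h4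
    simp only [map_smul, ← hB, B.repr_self, Finsupp.coe_sub, Finsupp.coe_finset_sum,
      Finsupp.coe_smul, Pi.sub_apply, Finset.sum_apply, Pi.smul_apply,
      Finsupp.single_apply, Sigma.mk.inj_iff, heq_eq_eq, Prod.mk.injEq,
      smul_eq_mul] at h4
    simp only [and_true, true_and, hB, mul_ite, mul_one, mul_zero] at h4
    rw [Finset.sum_ite_eq' Finset.univ S' (fun S'' => r (C l S T) l S'' U)] at h4
    simp only [Finset.mem_univ, if_true] at h4
    rw [sub_eq_zero] at h4
    rw [h4]
    by_cases hSS : S = S'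
    · simp [hSS]
    · rw [if_neg hSS, if_neg (fun h => hSS h.symm)]
  -- star preserves the lower span
  have hstarL : ∀ x ∈ Submodule.span K Lset, star x ∈ Submodule.span K Lset := by
    intro x hx
    have hle : Submodule.span K Lset ≤ (Submodule.span K Lset).comap star := by
      rw [Submodule.span_le]
      rintro y ⟨m, hm, U, V, rfl⟩
      simp only [Set.mem_preimage, SetLike.mem_coe, Submodule.mem_comap]
      rw [hstar_C]
      exact Submodule.subset_span ⟨m, hm, V, U, rfl⟩
    exact hle hx
  -- symmetry of φ
  have hφsymm : ∀ T U : M l, φ T U = φ U T := by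
    intro T U
    have h1 := hstarL _ (hφ T T U U)
    rw [map_sub, hstar_mul, map_smul, hstar_C, hstar_C, hstar_C] at h1
    have h2 := hφ U U T T
    have h3 : (φ U T - φ T U) • C l U T ∈ Submodule.span K Lset := by
      have := Submodule.sub_mem _ h1 h2
      rw [sub_sub_sub_cancel_left, ← sub_smul] at this
      exact this
    have h4 := hrepr _ h3 U T
    rw [map_smul, ← hB, B.repr_self] at h4
    simp only [Finsupp.smul_single, smul_eq_mul, mul_one, Finsupp.single_eq_same] at h4
    exact (sub_eq_zero.mp h4).symm
  -- the action of C l S T on W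
  have hactC : ∀ (S T : M l) (w : W), (C l S T) • w = Φ (CW T) w • CW S := by
    intro S T w
    have hb : ∀ U : M l, (C l S T) • CW U = φ T U • CW S := by
      intro U
      rw [hact]
      rw [Finset.sum_congr rfl (fun S' _ => by rw [hr S T S' U])]
      simp [ite_smul]
    conv_lhs => rw [← CW.sum_repr w]
    rw [Finset.smul_sum]
    have hcomm : ∀ (k : K) (x : W), (C l S T) • (k • x) = k • ((C l S T) • x) :=
      fun k x => smul_comm _ _ _
    calc ∑ U : M l, (C l S T) • (CW.repr w U • CW U)
        = ∑ U : M l, CW.repr w U • (φ T U • CW S) := by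
          refine Finset.sum_congr rfl fun U _ => ?_; rw [hcomm, hb]
      _ = (∑ U : M l, CW.repr w U * φ T U) • CW S := by
          rw [Finset.sum_smul]; simp [smul_smul]
      _ = Φ (CW T) w • CW S := by
          congr 1
          conv_rhs => rw [← CW.sum_repr w]
          rw [map_sum]
          refine Finset.sum_congr rfl fun U _ => ?_
          rw [map_smul, hΦ]; simp [mul_comm]
  -- expand Φ in the first argument
  have key2 : ∀ v w : W, Φ v w = ∑ S : M l, CW.repr v S * Φ (CW S) w := by
    intro v w
    conv_lhs => rw [← CW.sum_repr v]
    rw [map_sum, LinearMap.sum_apply]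
    refine Finset.sum_congr rfl fun S _ => ?_
    rw [map_smul, LinearMap.smul_apply, smul_eq_mul]
  have key1 : ∀ (S : M l) (w : W), Φ (CW S) w = ∑ T : M l, CW.repr w T * φ S T := by
    intro S w
    conv_lhs => rw [← CW.sum_repr w]
    rw [map_sum]
    refine Finset.sum_congr rfl fun T _ => ?_
    rw [map_smul, smul_eq_mul, hΦ]
  -- symmetry of Φ
  have hΦsymm : ∀ v w : W, Φ v w = Φ w v := by
    intro v w
    rw [key2, key2]
    simp_rw [key1]
    simp only [Finset.mul_sum]
    rw [Finset.sum_comm]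
    refine Finset.sum_congr rfl fun S _ => Finset.sum_congr rfl fun T _ => ?_
    rw [hφsymm]; ring
  -- membership in N
  have hmemN : ∀ w : W, w ∈ N ↔ ∀ v : W, Φ w v = 0 := by
    intro w
    constructor
    · intro hw v
      have : w ∈ (N : Set W) := hw
      rw [hN] at this
      exact this v
    · intro h
      have : w ∈ ({w : W | ∀ v : W, Φ w v = 0} : Set W) := h
      rw [← hN] at this
      exact this
  rw [isSimpleModule_iff_isCoatom]
  constructor
  · -- N ≠ ⊤
    intro htop
    obtain ⟨T, U, hTU⟩ := hφ_ne
    have : CW T ∈ N := htop ▸ Submodule.mem_top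
    have := (hmemN _).mp this (CW U)
    rw [hΦ] at this
    exact hTU this
  · -- every strictly larger submodule is ⊤
    intro P hP
    obtain ⟨w, hwP, hwN⟩ := SetLike.exists_of_lt hP
    -- w ∉ N so ∃ v, Φ w v ≠ 0
    rw [hmemN] at hwN
    push_neg at hwN
    obtain ⟨v, hv⟩ := hwN
    -- find a basis vector T with Φ (CW T) w ≠ 0
    have hvw : Φ v w ≠ 0 := by rw [hΦsymm]; exact hv
    have hex : ∃ T : M l, Φ (CW T) w ≠ 0 := by
      by_contra h
      push_neg at h
      apply hvw
      rw [key2]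
      exact Finset.sum_eq_zero fun T _ => by rw [h T, mul_zero]
    obtain ⟨T, hT⟩ := hex
    -- K-scalars act on P
    have hK : ∀ (k : K) (x : W), x ∈ P → k • x ∈ P := by
      intro k x hx
      rw [← algebraMap_smul A k x]
      exact P.smul_mem _ hx
    have hCWS : ∀ S : M l, CW S ∈ P := by
      intro S
      have h1 : (C l S T) • w ∈ P := P.smul_mem _ hwP
      rw [hactC] at h1
      have h2 := hK (Φ (CW T) w)⁻¹ _ h1
      rwa [smul_smul, inv_mul_cancel₀ hT, one_smul] at h2
    rw [eq_top_iff]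
    intro x _
    have : x = ∑ S : M l, CW.repr x S • CW S := (CW.sum_repr x).symm
    rw [this]
    exact Submodule.sum_mem _ fun S _ => hK _ _ (hCWS S)
end

section
/- Let B ⊆ A be K-algebras (K algebraically closed, char K ≠ 2) with A = B ⊕ uB for an invertible element u ∈ A satisfying uBu^{-1} = B and u² ∈ B. Suppose L is a simple A-module on which u^n acts by a nonzero scalar, with n odd. Then L is already simple as a B-module. (Proof sketch: any simple B-submodule L' satisfies u²L' = L' and u^nL' = L', hence uL' = L' since gcd(2,n)=1, so L' = L.) -/
/-- Let `B ⊆ A` be `K`-algebras (`K` algebraically closed of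
characteristic `≠ 2`) with `A = B ⊕ uB` for an invertible `u ∈ A` satisfying
`uBu⁻¹ = B` and `u² ∈ B`.  If `L` is a simple `A`-module on which `uⁿ` acts by a
nonzero scalar, with `n` odd, then `L` is already simple as a `B`-module (i.e. every
`K`-subspace of `L` stable under `B` is trivial). -/
theorem simple_restriction_to_index_two_subalgebra
    {K A : Type*} [Field K] [IsAlgClosed K] (hchar : (2 : K) ≠ 0)
    [Ring A] [Algebra K A]
    (B : Subalgebra K A) (u : A) (hu : IsUnit u)
    (hdecomp : ∀ x : A, ∃ b₁ ∈ B, ∃ b₂ ∈ B, x = b₁ + u * b₂)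
    (hdirect : ∀ b₁ ∈ B, ∀ b₂ ∈ B, b₁ + u * b₂ = 0 → b₁ = 0 ∧ b₂ = 0)
    (hconj : ∀ b ∈ B, ∃ b' ∈ B, u * b = b' * u)
    (hu2 : u ^ 2 ∈ B)
    (n : ℕ) (hn : Odd n)
    {L : Type*} [AddCommGroup L] [Module K L] [Module A L] [IsScalarTower K A L]
    (hL : IsSimpleModule A L)
    (α : K) (hα : α ≠ 0) (huL : ∀ m : L, u ^ n • m = α • m) :
    ∀ N : Submodule K L, (∀ b ∈ B, ∀ x ∈ N, b • x ∈ N) → N = ⊥ ∨ N = ⊤ := by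
  intro N hN
  obtain ⟨k, hk⟩ := hn
  have hkey : ∀ x ∈ N, u • x ∈ N := by
    intro x hx
    have h1 : u ^ (n + 1) ∈ B := by
      have he : n + 1 = 2 * (k + 1) := by omega
      rw [he, pow_mul]
      exact pow_mem hu2 _
    have h2 : u ^ (n + 1) • x ∈ N := hN _ h1 x hx
    have h3 : u • x = α⁻¹ • (u ^ (n + 1) • x) := by
      have h4 := huL (u • x)
      rw [smul_smul, ← pow_succ] at h4
      rw [h4, smul_smul, inv_mul_cancel₀ hα, one_smul]
    rw [h3]
    exact N.smul_mem _ h2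
  by_cases hbot : N = ⊥
  · exact Or.inl hbot
  · right
    let N' : Submodule A L :=
      { carrier := N
        add_mem' := fun ha hb => N.add_mem ha hb
        zero_mem' := N.zero_mem
        smul_mem' := by
          intro a x hx
          obtain ⟨b₁, hb₁, b₂, hb₂, rfl⟩ := hdecomp a
          have he : (b₁ + u * b₂) • x = b₁ • x + u • (b₂ • x) := by
            rw [add_smul, mul_smul]
          rw [he]
          exact N.add_mem (hN _ hb₁ x hx) (hkey _ (hN _ hb₂ x hx)) }
    rcases eq_bot_or_eq_top N' with h | h
    · exfalso
      apply hbot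
      rw [Submodule.eq_bot_iff]
      intro x hx
      have : x ∈ N' := hx
      rw [h] at this
      exact this
    · rw [Submodule.eq_top_iff']
      intro x
      have : x ∈ N' := h ▸ Submodule.mem_top
      exact this
end
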